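/- arXiv:1509.05239 — 2 statements merged into one kernel-verified Lean document; each statement's English description precedes it below -/
import Mathlib

section
/- For the TRIP-Stern sequence for (e,e,e), let α be the real number satisfying α³ − 4α² + 5α − 4 = 0 (the unique real zero of x³ − 4x² + 5x − 4). Then, as n → ∞, S₂(n)/S₁(n) → α − 1 and S₃(n)/S₂(n) → α − 1, where the ratios are taken in ℝ. -/
open Filter Topology

/-- `f₀(a,b,c) = (b,c,a+c)` for the triplet `(e,e,e)`. -/
def f0 (p : ℤ × ℤ × ℤ) : ℤ × ℤ × ℤ := (p.2.1, p.2.2, p.1 + p.2.2)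

/-- `f₁(a,b,c) = (a,b,a+c)` for the triplet `(e,e,e)`. -/
def f1 (p : ℤ × ℤ × ℤ) : ℤ × ℤ × ℤ := (p.1, p.2.1, p.1 + p.2.2)

/-- One step of the TRIP-Stern tree: apply `f₁` on a `true` and `f₀` on a `false`. -/
def step (p : ℤ × ℤ × ℤ) (i : Bool) : ℤ × ℤ × ℤ := if i then f1 p else f0 p

/-- `Δ(v) = f_{iₙ}(⋯ f_{i₁}(1,1,1) ⋯)`, applying `f_{i₁}` first. -/
def delta (v : List Bool) : ℤ × ℤ × ℤ := v.foldl step (1, 1, 1)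

/-- `S₁ n` is the sum of the first coordinates of the level-`n` triples. -/
def S1 (n : ℕ) : ℤ := ∑ v : Fin n → Bool, (delta (List.ofFn v)).1

/-- `S₂ n` is the sum of the second coordinates of the level-`n` triples. -/
def S2 (n : ℕ) : ℤ := ∑ v : Fin n → Bool, (delta (List.ofFn v)).2.1

/-- `S₃ n` is the sum of the third coordinates of the level-`n` triples. -/
def S3 (n : ℕ) : ℤ := ∑ v : Fin n → Bool, (delta (List.ofFn v)).2.2

/-- `S n = S₁ n + S₂ n + S₃ n` is the sum of all entries of level `n`. -/
def S (n : ℕ) : ℤ := S1 n + S2 n + S3 n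

/-!
The level sums `W n = (S₁ n, S₂ n, S₃ n)` satisfy `W (n + 1) = W n (A₀ + A₁)`, so `S₁` obeys the
recurrence with characteristic polynomial `x³ − 4x² + 5x − 4`, while `S₂` and `S₃` are its first and
second differences. Dividing out the real root `α ≈ 2.7`, the sequence `S₁ (n + 1) − α S₁ n` obeys a
second-order recurrence and is `O(2.1ⁿ)`; since `2.1 < α` this forces `S₁ n ≥ c αⁿ` with `c > 0`,
whence `S₁ (n + 1) / S₁ n → α`. Ratios of consecutive differences then also tend to `α`, and
`S₂ / S₁`, `S₃ / S₂` are such ratios minus one.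
-/

def stepSum : ℤ × ℤ × ℤ →+ ℤ × ℤ × ℤ :=
  AddMonoidHom.mk' (fun p => (p.1 + p.2.1, p.2.1 + p.2.2, 2 * p.1 + 2 * p.2.2)) fun p q => by
    ext <;> simp only [Prod.fst_add, Prod.snd_add] <;> ring

lemma step_true_add_step_false (p : ℤ × ℤ × ℤ) : step p true + step p false = stepSum p := by
  simp only [step, f0, f1, stepSum, AddMonoidHom.mk'_apply, Prod.mk_add_mk, Bool.false_eq_true,
    if_false, if_true, Prod.mk.injEq, true_and]
  ring

def levelSum (n : ℕ) : ℤ × ℤ × ℤ := ∑ v : Fin n → Bool, delta (List.ofFn v)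

lemma levelSum_zero : levelSum 0 = (1, 1, 1) := rfl

lemma levelSum_succ (n : ℕ) : levelSum (n + 1) = stepSum (levelSum n) := by
  rw [levelSum, ← (Fin.snocEquiv fun _ => Bool).sum_comp, Fintype.sum_prod_type, Fintype.sum_bool,
    levelSum, map_sum, ← Finset.sum_add_distrib]
  refine Finset.sum_congr rfl fun v _ => ?_
  simp only [Fin.snocEquiv_apply, List.ofFn_succ', Fin.snoc_castSucc, Fin.snoc_last, delta,
    List.concat_eq_append, List.foldl_append, List.foldl_cons, List.foldl_nil]
  exact step_true_add_step_false _

lemma levelSum_eq (n : ℕ) : levelSum n = (S1 n, S2 n, S3 n) := by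
  simp only [levelSum, S1, S2, S3, Prod.ext_iff, Prod.fst_sum, Prod.snd_sum, and_self]

lemma S1_succ (n : ℕ) : S1 (n + 1) = S1 n + S2 n := by
  simpa [levelSum_eq, stepSum] using congrArg Prod.fst (levelSum_succ n)

lemma S2_succ (n : ℕ) : S2 (n + 1) = S2 n + S3 n := by
  simpa [levelSum_eq, stepSum] using congrArg (·.2.1) (levelSum_succ n)

lemma S3_succ (n : ℕ) : S3 (n + 1) = 2 * S1 n + 2 * S3 n := by
  simpa [levelSum_eq, stepSum] using congrArg (·.2.2) (levelSum_succ n)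

lemma S1_pos_and_S2_pos_and_S3_pos (n : ℕ) : 0 < S1 n ∧ 0 < S2 n ∧ 0 < S3 n := by
  induction n with
  | zero =>
    have h := levelSum_eq 0
    simp only [levelSum_zero, Prod.mk.injEq] at h
    omega
  | succ n ih =>
    rw [S1_succ, S2_succ, S3_succ]
    omega

lemma S1_add_three (n : ℕ) : S1 (n + 3) = 4 * S1 (n + 2) - 5 * S1 (n + 1) + 4 * S1 n := by
  have h₁ : S1 (n + 3) = S1 (n + 2) + S2 (n + 2) := S1_succ (n + 2)
  have h₂ : S2 (n + 2) = S2 (n + 1) + S3 (n + 1) := S2_succ (n + 1)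
  have h₃ : S1 (n + 2) = S1 (n + 1) + S2 (n + 1) := S1_succ (n + 1)
  have := S1_succ n; have := S2_succ n; have := S3_succ n
  omega

section Asymptotics

variable {x y : ℕ → ℝ} {α : ℝ}

lemma sub_mul_recurrence {b : ℕ → ℝ} {p q s : ℝ} (hα : α ≠ 0)
    (hroot : α ^ 3 = p * α ^ 2 + q * α + s)
    (hx : ∀ n, x (n + 3) = p * x (n + 2) + q * x (n + 1) + s * x n)
    (hb : ∀ n, b n = x (n + 1) - α * x n) (n : ℕ) :
    b (n + 2) = (p - α) * b (n + 1) + -(s / α) * b n := by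
  have hq : q = α ^ 2 - p * α - s / α := by
    field_simp
    linear_combination -hroot
  rw [hb, hb, hb, show n + 2 + 1 = n + 3 from rfl, hx, hq]
  field_simp
  ring

lemma abs_le_mul_pow_of_recurrence {b : ℕ → ℝ} {u v r C : ℝ} (hr : 0 ≤ r)
    (hb : ∀ n, b (n + 2) = u * b (n + 1) + v * b n) (huv : |u| * r + |v| ≤ r ^ 2)
    (h0 : |b 0| ≤ C) (h1 : |b 1| ≤ C * r) (n : ℕ) : |b n| ≤ C * r ^ n := by
  have hC : 0 ≤ C := (abs_nonneg _).trans h0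
  induction n using Nat.twoStepInduction with
  | zero => simpa using h0
  | one => simpa using h1
  | more n ih₀ ih₁ =>
    calc |b (n + 2)| ≤ |u| * |b (n + 1)| + |v| * |b n| := by
          rw [hb, ← abs_mul, ← abs_mul]; exact abs_add_le _ _
      _ ≤ |u| * (C * r ^ (n + 1)) + |v| * (C * r ^ n) := by gcongr
      _ = C * r ^ n * (|u| * r + |v|) := by ring
      _ ≤ C * r ^ n * r ^ 2 := by gcongr
      _ = C * r ^ (n + 2) := by ring

lemma pow_mul_le_of_abs_sub_mul_le {C r : ℝ} {N : ℕ} (hr : 0 ≤ r) (hrα : r < α)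
    (hb : ∀ n, |x (n + 1) - α * x n| ≤ C * r ^ n) (k : ℕ) :
    α ^ k * (x N - C / (α - r) * r ^ N) ≤ x (k + N) := by
  set D := C / (α - r)
  have hD : D * α = C + D * r := by
    simp only [D]
    field_simp [(sub_pos.2 hrα).ne']
    ring
  have hgeom := geom_le (u := fun k => x (k + N) - D * r ^ (k + N)) (hr.trans hrα.le) k
    fun j _ => by
      have hD' : D * α * r ^ (j + N) = C * r ^ (j + N) + D * r ^ (j + N + 1) := by
        rw [hD]; ring
      have := neg_abs_le (x (j + N + 1) - α * x (j + N))
      have := hb (j + N)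
      simp only [add_right_comm j 1 N]
      linarith
  have hC : 0 ≤ C := (abs_nonneg _).trans (by simpa using hb 0)
  have : 0 ≤ D * r ^ (k + N) := by have := sub_pos.2 hrα; positivity
  simp only [zero_add] at hgeom
  linarith

lemma tendsto_succ_div_of_abs_sub_mul_le {C r : ℝ} {N : ℕ} (hr : 0 ≤ r) (hrα : r < α)
    (hb : ∀ n, |x (n + 1) - α * x n| ≤ C * r ^ n) (hN : C / (α - r) * r ^ N < x N) :
    Tendsto (fun n => x (n + 1) / x n) atTop (𝓝 α) := by
  have hα : 0 < α := hr.trans_lt hrα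
  have hC : 0 ≤ C := (abs_nonneg _).trans (by simpa using hb 0)
  set c := x N - C / (α - r) * r ^ N
  have hc : 0 < c := sub_pos.2 hN
  have hlower := pow_mul_le_of_abs_sub_mul_le hr hrα hb (N := N)
  have hbound (k : ℕ) : ‖x (k + N + 1) / x (k + N) - α‖ ≤ C * r ^ N / c * (r / α) ^ k := by
    have hx : 0 < x (k + N) := (by positivity : 0 < α ^ k * c).trans_le (hlower k)
    rw [Real.norm_eq_abs, div_sub' hx.ne', abs_div, abs_of_pos hx, div_le_iff₀ hx]
    calc |x (k + N + 1) - x (k + N) * α| ≤ C * r ^ (k + N) := by rw [mul_comm]; exact hb _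
      _ = C * r ^ N / c * (r / α) ^ k * (α ^ k * c) := by
        rw [div_pow, pow_add]
        field_simp
      _ ≤ C * r ^ N / c * (r / α) ^ k * x (k + N) := by gcongr; exact hlower k
  rw [← tendsto_add_atTop_iff_nat N]
  refine tendsto_iff_norm_sub_tendsto_zero.2 (squeeze_zero (fun _ => norm_nonneg _) hbound ?_)
  simpa using (tendsto_pow_atTop_nhds_zero_of_lt_one (div_nonneg hr hα.le)
    ((div_lt_one hα).2 hrα)).const_mul (C * r ^ N / c)

lemma tendsto_div_of_succ_eq_add (hx : ∀ n, x n ≠ 0) (hxy : ∀ n, x (n + 1) = x n + y n)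
    (h : Tendsto (fun n => x (n + 1) / x n) atTop (𝓝 α)) :
    Tendsto (fun n => y n / x n) atTop (𝓝 (α - 1)) :=
  (h.sub_const 1).congr fun n => by rw [hxy, add_div, div_self (hx n), add_sub_cancel_left]

lemma tendsto_succ_div_of_succ_eq_add (hx : ∀ n, x n ≠ 0) (hxy : ∀ n, x (n + 1) = x n + y n)
    (hα : α ≠ 1) (h : Tendsto (fun n => x (n + 1) / x n) atTop (𝓝 α)) :
    Tendsto (fun n => y (n + 1) / y n) atTop (𝓝 α) := by
  have hyx := tendsto_div_of_succ_eq_add hx hxy h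
  have := ((hyx.comp (tendsto_add_atTop_nat 1)).mul h).div hyx (sub_ne_zero.2 hα)
  rw [mul_div_cancel_left₀ _ (sub_ne_zero.2 hα)] at this
  refine this.congr fun n => ?_
  simp only [Function.comp_apply, Pi.div_apply]
  -- also when `y n = 0`: then both sides are `0`
  field_simp [hx n, hx (n + 1)]

end Asymptotics

lemma root_mem_Ioo {α : ℝ} (hα : α ^ 3 - 4 * α ^ 2 + 5 * α - 4 = 0) : 2.65 < α ∧ α < 2.75 := by
  constructor <;> nlinarith [sq_nonneg (α - 2.65), sq_nonneg (α - 2.75), sq_nonneg (α - 1)]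

lemma S1_zero_one_two_five : S1 0 = 1 ∧ S1 1 = 2 ∧ S1 2 = 4 ∧ S1 5 = 78 := by
  have h (n : ℕ) : S1 n = (levelSum n).1 := by rw [levelSum_eq]
  simp only [h, levelSum_succ, levelSum_zero]
  decide

lemma tendsto_S1_succ_div {α : ℝ} (hα : α ^ 3 - 4 * α ^ 2 + 5 * α - 4 = 0) :
    Tendsto (fun n => (S1 (n + 1) : ℝ) / S1 n) atTop (𝓝 α) := by
  obtain ⟨hlo, hhi⟩ := root_mem_Ioo hα
  set x : ℕ → ℝ := fun n => (S1 n : ℝ) with hx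
  have hrec (n : ℕ) : x (n + 3) = 4 * x (n + 2) + -5 * x (n + 1) + 4 * x n := by
    simp only [hx]; rw [S1_add_three]; push_cast; ring
  obtain ⟨h0, h1, h2, h5⟩ := S1_zero_one_two_five
  set b : ℕ → ℝ := fun n => x (n + 1) - α * x n
  have hb := sub_mul_recurrence (b := b) (by linarith) (by linear_combination hα) hrec fun _ => rfl
  -- `2.1 < α` is a crude majorant for the deflated recurrence, and level `5` is the first where
  -- `S₁` beats the resulting error term
  have hdiff := abs_le_mul_pow_of_recurrence (C := 1) (r := 2.1) (by norm_num) hb ?_ ?_ ?_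
  refine tendsto_succ_div_of_abs_sub_mul_le (x := x) (N := 5) (by norm_num) (by linarith) hdiff ?_
  · change _ < ((S1 5 : ℤ) : ℝ)
    rw [h5, div_mul_eq_mul_div, div_lt_iff₀ (by linarith)]
    norm_num
    linarith
  · have : 4 / α ≤ 1.51 := by rw [div_le_iff₀ (by linarith)]; linarith
    rw [abs_of_pos (by linarith), abs_neg, abs_of_pos (by positivity)]
    linarith
  · simp only [b, hx, h0, h1]
    rw [abs_le]; constructor <;> push_cast <;> linarith
  · simp only [b, hx, h1, h2]
    rw [abs_le]; constructor <;> push_cast <;> linarith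

/-- For the TRIP-Stern sequence for `(e,e,e)`, if `α` is the real zero of
`x³ − 4x² + 5x − 4`, then `S₂(n)/S₁(n) → α − 1` and `S₃(n)/S₂(n) → α − 1`
as `n → ∞`. -/
theorem levelSum_coordinate_ratios_eee (α : ℝ)
    (hα : α ^ 3 - 4 * α ^ 2 + 5 * α - 4 = 0) :
    Tendsto (fun n : ℕ => (S2 n : ℝ) / (S1 n : ℝ)) atTop (𝓝 (α - 1)) ∧
    Tendsto (fun n : ℕ => (S3 n : ℝ) / (S2 n : ℝ)) atTop (𝓝 (α - 1)) := by
  have hS1 (n : ℕ) : (S1 n : ℝ) ≠ 0 := by exact_mod_cast (S1_pos_and_S2_pos_and_S3_pos n).1.ne'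
  have hS2 (n : ℕ) : (S2 n : ℝ) ≠ 0 := by exact_mod_cast (S1_pos_and_S2_pos_and_S3_pos n).2.1.ne'
  have h12 (n : ℕ) : (S1 (n + 1) : ℝ) = S1 n + S2 n := by exact_mod_cast S1_succ n
  have h23 (n : ℕ) : (S2 (n + 1) : ℝ) = S2 n + S3 n := by exact_mod_cast S2_succ n
  have hα1 : α ≠ 1 := by linarith [(root_mem_Ioo hα).1]
  have hratio1 := tendsto_S1_succ_div hα
  have hratio2 := tendsto_succ_div_of_succ_eq_add (x := fun n => (S1 n : ℝ))
    (y := fun n => (S2 n : ℝ)) hS1 h12 hα1 hratio1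
  exact ⟨tendsto_div_of_succ_eq_add (x := fun n => (S1 n : ℝ)) (y := fun n => (S2 n : ℝ))
      hS1 h12 hratio1,
    tendsto_div_of_succ_eq_add (x := fun n => (S2 n : ℝ)) (y := fun n => (S3 n : ℝ))
      hS2 h23 hratio2⟩
end

section
/- Let S be the set of all triples appearing in the TRIP-Stern sequence for (e,e,e), i.e., S = {Δ(v) : v a finite word in {0,1}, including the empty word with Δ(∅) = (1,1,1)}. Then for every X ∈ S with X ≠ (1,1,1), there exists a unique Y ∈ S such that X = Y·A₀ or X = Y·A₁. -/
/-- The set of all triples appearing in the TRIP-Stern sequence for `(e,e,e)`. -/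
def TS : Set (ℤ × ℤ × ℤ) := {p | ∃ v : List Bool, delta v = p}

/-!
Every triple `(a, b, c)` of the tree satisfies `1 ≤ a ≤ b ≤ c`, with `b = c` only at the root.
Both `f₀` and `f₁` are injective, so a triple has at most one parent of each kind, and the two
kinds can be told apart by `c - b`: on `f₀ (a, b, c) = (b, c, a + c)` it equals `a ≤ b`, the first
entry, while on `f₁ (a, b, c) = (a, b, a + c)` it equals `a + (c - b)`, which exceeds the first
entry unless `(a, b, c)` is the root. At the root the two parents coincide, `f₀ (1,1,1) = f₁ (1,1,1)`.
-/

def Admissible (p : ℤ × ℤ × ℤ) : Prop :=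
  1 ≤ p.1 ∧ p.1 ≤ p.2.1 ∧ p.2.1 ≤ p.2.2 ∧ (p.2.1 = p.2.2 → p = (1, 1, 1))

lemma Admissible.f0 {p : ℤ × ℤ × ℤ} (hp : Admissible p) : Admissible (f0 p) := by
  obtain ⟨a, b, c⟩ := p
  simp only [Admissible, _root_.f0, Prod.mk.injEq] at hp ⊢
  omega

lemma Admissible.f1 {p : ℤ × ℤ × ℤ} (hp : Admissible p) : Admissible (f1 p) := by
  obtain ⟨a, b, c⟩ := p
  simp only [Admissible, _root_.f1, Prod.mk.injEq] at hp ⊢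
  omega

lemma Admissible.step {p : ℤ × ℤ × ℤ} (hp : Admissible p) (i : Bool) :
    Admissible (step p i) := by
  cases i
  · exact hp.f0
  · exact hp.f1

lemma delta_append_singleton (v : List Bool) (i : Bool) :
    delta (v ++ [i]) = step (delta v) i := by
  simp [delta, List.foldl_append]

lemma admissible_delta (v : List Bool) : Admissible (delta v) := by
  induction v using List.reverseRecOn with
  | nil => exact ⟨le_rfl, le_rfl, le_rfl, fun _ => rfl⟩
  | append_singleton v i ih => rw [delta_append_singleton]; exact ih.step i

lemma Admissible.of_mem_TS {p : ℤ × ℤ × ℤ} (hp : p ∈ TS) : Admissible p := by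
  obtain ⟨v, rfl⟩ := hp
  exact admissible_delta v

lemma f0_injective : Function.Injective f0 := by
  rintro ⟨a, b, c⟩ ⟨a', b', c'⟩ h
  simp only [f0, Prod.mk.injEq] at h ⊢
  omega

lemma f1_injective : Function.Injective f1 := by
  rintro ⟨a, b, c⟩ ⟨a', b', c'⟩ h
  simp only [f1, Prod.mk.injEq] at h ⊢
  omega

lemma eq_of_f0_eq_f1 {Y Y' : ℤ × ℤ × ℤ} (hY : Admissible Y) (hY' : Admissible Y')
    (h : f0 Y = f1 Y') : Y = Y' := by
  obtain ⟨a, b, c⟩ := Y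
  obtain ⟨a', b', c'⟩ := Y'
  simp only [Admissible, f0, f1, Prod.mk.injEq] at hY hY' h ⊢
  omega

lemma eq_of_parent {X Y Y' : ℤ × ℤ × ℤ} (hY : Admissible Y) (hY' : Admissible Y')
    (hYX : f0 Y = X ∨ f1 Y = X) (hY'X : f0 Y' = X ∨ f1 Y' = X) : Y = Y' := by
  rcases hYX with rfl | rfl <;> rcases hY'X with h | h
  · exact f0_injective h.symm
  · exact eq_of_f0_eq_f1 hY hY' h.symm
  · exact (eq_of_f0_eq_f1 hY' hY h).symm
  · exact f1_injective h.symm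

/-- For every triple `X` in the TRIP-Stern sequence for `(e,e,e)` with `X ≠ (1,1,1)`,
there is a unique `Y` in the sequence with `X = Y·A₀` or `X = Y·A₁`. -/
theorem unique_parent (X : ℤ × ℤ × ℤ) (hX : X ∈ TS) (hne : X ≠ (1, 1, 1)) :
    ∃! Y : ℤ × ℤ × ℤ, Y ∈ TS ∧ (f0 Y = X ∨ f1 Y = X) := by
  obtain ⟨v, rfl⟩ := hX
  cases v using List.reverseRecOn with
  | nil => exact absurd rfl hne
  | append_singleton w i =>
    have hparent : f0 (delta w) = delta (w ++ [i]) ∨ f1 (delta w) = delta (w ++ [i]) := by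
      rw [delta_append_singleton]
      cases i
      · exact Or.inl rfl
      · exact Or.inr rfl
    refine ⟨delta w, ⟨⟨w, rfl⟩, hparent⟩, fun Y ⟨hY, hYX⟩ => ?_⟩
    exact eq_of_parent (Admissible.of_mem_TS hY) (admissible_delta w) hYX hparent
end
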